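/- In the graph-directed setting on a complete, normal, regular semi-metric space, there exists at most one q-tuple H of non-empty bounded closed subsets with T(H) = H, where T(H)_i = ∪_j ∪_{e ∈ E_{i,j}} f_e(H_j) and each f_e is a φ_e-contraction for right-continuous comparison functions φ_e. -/

import Mathlib

open Filter Topology Set

noncomputable section

/-- A semi-metric: symmetric, vanishing exactly on the diagonal (no triangle inequality). -/
def IsSemiMetric {X : Type*} (d : X → X → NNReal) : Prop :=
  (∀ x y, d x y = d y x) ∧ ∀ x y, d x y = 0 ↔ x = y

/-- Ball of radius `r` around `x`. -/
def SMBall {X : Type*} (d : X → X → NNReal) (x : X) (r : NNReal) : Set X := {y | d x y < r}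

/-- The basic triangle function `Φ_d(u,v) = sup{d(x,y) : ∃ z, d(x,z) ≤ u, d(y,z) ≤ v}`. -/
def SMPhi {X : Type*} (d : X → X → NNReal) (u v : NNReal) : ENNReal :=
  ⨆ (p : X × X) (_ : ∃ z : X, d p.1 z ≤ u ∧ d p.2 z ≤ v), (d p.1 p.2 : ENNReal)

/-- Normal property: the basic triangle function is finite-valued. -/
def SMNormal {X : Type*} (d : X → X → NNReal) : Prop := ∀ u v : NNReal, SMPhi d u v < ⊤

/-- Regular property: the basic triangle function is continuous at `(0,0)`. -/
def SMRegular {X : Type*} (d : X → X → NNReal) : Prop :=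
  ∀ ε : NNReal, 0 < ε → ∃ δ : NNReal, 0 < δ ∧
    ∀ u v : NNReal, u ≤ δ → v ≤ δ → SMPhi d u v < (ε : ENNReal)

/-- Cauchy sequence with respect to a semi- or pre-metric. -/
def SMCauchy {X : Type*} (d : X → X → NNReal) (x : ℕ → X) : Prop :=
  ∀ ε : NNReal, 0 < ε → ∃ N : ℕ, ∀ m ≥ N, ∀ n ≥ N, d (x m) (x n) < ε

/-- Completeness: every Cauchy sequence converges. -/
def SMComplete {X : Type*} (d : X → X → NNReal) : Prop :=
  ∀ x : ℕ → X, SMCauchy d x → ∃ l : X, Tendsto (fun n => d (x n) l) atTop (𝓝 0)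

/-- Boundedness: contained in some ball. -/
def SMBounded {X : Type*} (d : X → X → NNReal) (H : Set X) : Prop :=
  ∃ (x₀ : X) (r : NNReal), H ⊆ SMBall d x₀ r

/-- Comparison function: increasing, with iterates tending to zero on `(0,∞)`. -/
def SMComparison (φ : NNReal → NNReal) : Prop :=
  Monotone φ ∧ ∀ t : NNReal, 0 < t → Tendsto (fun n => φ^[n] t) atTop (𝓝 0)

/-- Right-continuity of a function `[0,∞) → [0,∞)`. -/
def SMRightCont (φ : NNReal → NNReal) : Prop :=
  ∀ t : NNReal, ContinuousWithinAt φ (Ici t) t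

/-- Diameter of a set. -/
def SMdiam {X : Type*} (d : X → X → NNReal) (H : Set X) : ENNReal :=
  ⨆ (x ∈ H) (y ∈ H), (d x y : ENNReal)

/-- `r`-neighborhood of a set. -/
def SMnbhd {X : Type*} (d : X → X → NNReal) (A : Set X) (r : NNReal) : Set X :=
  ⋃ x ∈ A, SMBall d x r

/-- Kuratowski measure of non-compactness. -/
def SMchi {X : Type*} (d : X → X → NNReal) (H : Set X) : ENNReal :=
  sInf {c : ENNReal | ∃ r : NNReal, c = (r : ENNReal) ∧ 0 < r ∧
    ∃ s : Finset X, H ⊆ ⋃ x ∈ s, SMBall d x r}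

/-- Hausdorff-Pompeiu distance between subsets. -/
def SMdHP {X : Type*} (d : X → X → NNReal) (A B : Set X) : ENNReal :=
  sInf {c : ENNReal | ∃ r : NNReal, c = (r : ENNReal) ∧ 0 < r ∧
    A ⊆ SMnbhd d B r ∧ B ⊆ SMnbhd d A r}

/-- Open sets of the semi-metric topology. -/
def SMOpen {X : Type*} (d : X → X → NNReal) (U : Set X) : Prop :=
  ∀ x ∈ U, ∃ r : NNReal, 0 < r ∧ SMBall d x r ⊆ U

/-- Closed sets of the semi-metric topology. -/
def SMClosed {X : Type*} (d : X → X → NNReal) (A : Set X) : Prop := SMOpen d Aᶜ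

/-- Max semi-metric on `X^q`. -/
def SMmax {X : Type*} (q : ℕ) (d : X → X → NNReal) (x y : Fin q → X) : NNReal :=
  Finset.univ.sup fun i => d (x i) (y i)

/-!
Let `D` be the largest Hausdorff–Pompeiu distance `d_HP(H₁ i, H₂ i)`; it is finite because `d` is
normal. If `D < r`, every point of `H₁ j` lies within `r` of `H₂ j` and vice versa, so applying the
maps `f e` and using invariance gives `D ≤ Φ r` for `Φ = max_e φ_e`. Since `Φ` is right-continuous
with `Φ t < t` for `t > 0`, letting `r ↓ D` forces `D = 0`, and closed sets at Hausdorff–Pompeiu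
distance zero coincide. No triangle inequality is needed anywhere.
-/

def graphHutchinson {X E ι : Type*} (src tgt : E → ι) (f : E → X → X) (H : ι → Set X) (i : ι) :
    Set X :=
  ⋃ (e : E) (_ : src e = i), f e '' H (tgt e)

section SemiMetric

variable {X : Type*} {d : X → X → NNReal}

lemma mem_SMnbhd_iff {A : Set X} {r : NNReal} {a : X} :
    a ∈ SMnbhd d A r ↔ ∃ b ∈ A, d b a < r := by
  simp [SMnbhd, SMBall]

lemma SMnbhd_mono (A : Set X) {r s : NNReal} (h : r ≤ s) : SMnbhd d A r ⊆ SMnbhd d A s :=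
  fun _ ha ↦
    let ⟨b, hb, hba⟩ := mem_SMnbhd_iff.1 ha
    mem_SMnbhd_iff.2 ⟨b, hb, hba.trans_le h⟩

lemma SMBounded.exists_forall_le (hsymm : ∀ x y, d x y = d y x) (hnorm : SMNormal d)
    {A : Set X} (hA : SMBounded d A) (b : X) : ∃ M : NNReal, ∀ a ∈ A, d b a ≤ M := by
  obtain ⟨x₀, r, hAr⟩ := hA
  refine ⟨(SMPhi d (d b x₀) r).toNNReal, fun a ha ↦ ?_⟩
  have hle : (d b a : ENNReal) ≤ SMPhi d (d b x₀) r :=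
    le_iSup₂ (f := fun (p : X × X) (_ : ∃ z, d p.1 z ≤ d b x₀ ∧ d p.2 z ≤ r) ↦
      (d p.1 p.2 : ENNReal)) (b, a) ⟨x₀, le_rfl, (hsymm a x₀).trans_le (hAr ha).le⟩
  rwa [← ENNReal.coe_toNNReal (hnorm _ _).ne, ENNReal.coe_le_coe] at hle

lemma SMdHP_comm (A B : Set X) : SMdHP d A B = SMdHP d B A := by
  simp only [SMdHP, and_comm]

lemma SMdHP_le_of_subset_SMnbhd {A B : Set X} {r : NNReal} (hr : 0 < r)
    (hAB : A ⊆ SMnbhd d B r) (hBA : B ⊆ SMnbhd d A r) : SMdHP d A B ≤ r :=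
  sInf_le ⟨r, rfl, hr, hAB, hBA⟩

lemma subset_SMnbhd_of_SMdHP_lt {A B : Set X} {r : NNReal} (h : SMdHP d A B < r) :
    A ⊆ SMnbhd d B r ∧ B ⊆ SMnbhd d A r := by
  obtain ⟨_, ⟨s, rfl, -, hAB, hBA⟩, hsr⟩ := sInf_lt_iff.1 h
  have hsr : s ≤ r := (ENNReal.coe_lt_coe.1 hsr).le
  exact ⟨hAB.trans (SMnbhd_mono B hsr), hBA.trans (SMnbhd_mono A hsr)⟩

lemma SMdHP_lt_top (hsymm : ∀ x y, d x y = d y x) (hnorm : SMNormal d) {A B : Set X}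
    (hAne : A.Nonempty) (hA : SMBounded d A) (hBne : B.Nonempty) (hB : SMBounded d B) :
    SMdHP d A B < ⊤ := by
  obtain ⟨a₀, ha₀⟩ := hAne
  obtain ⟨b₀, hb₀⟩ := hBne
  obtain ⟨M, hM⟩ := hA.exists_forall_le hsymm hnorm b₀
  obtain ⟨N, hN⟩ := hB.exists_forall_le hsymm hnorm a₀
  have hMN : M ⊔ N < M ⊔ N + 1 := lt_add_one _
  refine (SMdHP_le_of_subset_SMnbhd (r := M ⊔ N + 1) (by positivity) (fun a ha ↦ ?_)
    (fun b hb ↦ ?_)).trans_lt ENNReal.coe_lt_top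
  · exact mem_SMnbhd_iff.2 ⟨b₀, hb₀, ((hM a ha).trans le_sup_left).trans_lt hMN⟩
  · exact mem_SMnbhd_iff.2 ⟨a₀, ha₀, ((hN b hb).trans le_sup_right).trans_lt hMN⟩

lemma SMClosed.subset_of_SMdHP_eq_zero (hsymm : ∀ x y, d x y = d y x) {A B : Set X}
    (hB : SMClosed d B) (h : SMdHP d A B = 0) : A ⊆ B := by
  intro a ha
  by_contra haB
  obtain ⟨ρ, hρ, hball⟩ := hB a haB
  have hlt : SMdHP d A B < ρ := by rw [h]; exact_mod_cast hρ
  obtain ⟨b, hb, hba⟩ := mem_SMnbhd_iff.1 ((subset_SMnbhd_of_SMdHP_lt hlt).1 ha)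
  exact hball (show d a b < ρ from hsymm a b ▸ hba) hb

lemma eq_of_SMdHP_eq_zero (hsymm : ∀ x y, d x y = d y x) {A B : Set X} (hA : SMClosed d A)
    (hB : SMClosed d B) (h : SMdHP d A B = 0) : A = B :=
  (hB.subset_of_SMdHP_eq_zero hsymm h).antisymm
    (hA.subset_of_SMdHP_eq_zero hsymm (SMdHP_comm A B ▸ h))

variable {E ι : Type*} {src tgt : E → ι} {f : E → X → X} {ψ : NNReal → NNReal}

lemma graphHutchinson_subset_SMnbhd (hψ : Monotone ψ)
    (hf : ∀ e x y, d (f e x) (f e y) ≤ ψ (d x y)) {A B : ι → Set X} {r s : NNReal}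
    (hAB : ∀ j, A j ⊆ SMnbhd d (B j) r) (hrs : ψ r < s) (i : ι) :
    graphHutchinson src tgt f A i ⊆ SMnbhd d (graphHutchinson src tgt f B i) s := by
  intro a ha
  simp only [graphHutchinson, mem_iUnion, mem_image] at ha
  obtain ⟨e, rfl, x, hx, rfl⟩ := ha
  obtain ⟨y, hy, hyx⟩ := mem_SMnbhd_iff.1 (hAB (tgt e) hx)
  refine mem_SMnbhd_iff.2 ⟨f e y, mem_iUnion₂.2 ⟨e, rfl, mem_image_of_mem _ hy⟩, ?_⟩
  calc d (f e y) (f e x) ≤ ψ (d y x) := hf e y x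
    _ ≤ ψ r := hψ hyx.le
    _ < s := hrs

lemma SMdHP_graphHutchinson_le (hψ : Monotone ψ)
    (hf : ∀ e x y, d (f e x) (f e y) ≤ ψ (d x y)) {A B : ι → Set X} {r : NNReal}
    (h : ∀ j, SMdHP d (A j) (B j) < r) (i : ι) :
    SMdHP d (graphHutchinson src tgt f A i) (graphHutchinson src tgt f B i) ≤ ψ r := by
  refine ENNReal.le_of_forall_pos_le_add fun ε hε _ ↦ ?_
  have hlt : ψ r < ψ r + ε := lt_add_of_pos_right _ hε
  exact_mod_cast SMdHP_le_of_subset_SMnbhd (by positivity)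
    (graphHutchinson_subset_SMnbhd hψ hf (fun j ↦ (subset_SMnbhd_of_SMdHP_lt (h j)).1) hlt i)
    (graphHutchinson_subset_SMnbhd hψ hf (fun j ↦ (subset_SMnbhd_of_SMdHP_lt (h j)).2) hlt i)

end SemiMetric

lemma SMComparison.lt_self {φ : NNReal → NNReal} (hφ : SMComparison φ) {t : NNReal}
    (ht : 0 < t) : φ t < t := by
  by_contra! hle
  have hiter : ∀ n, t ≤ φ^[n] t := by
    intro n
    induction n with
    | zero => rfl
    | succ n ih =>
      rw [Function.iterate_succ_apply']
      exact hle.trans (hφ.1 ih)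
  exact (ht.trans_le (ge_of_tendsto' (hφ.2 t ht) hiter)).false

lemma eq_zero_of_forall_lt_imp_le_apply {ψ : NNReal → NNReal} (hψ : ∀ t, 0 < t → ψ t < t)
    (hcont : SMRightCont ψ) {D : ENNReal} (hD : D ≠ ⊤)
    (h : ∀ r : NNReal, D < r → D ≤ ψ r) : D = 0 := by
  lift D to NNReal using hD
  simp only [ENNReal.coe_lt_coe, ENNReal.coe_le_coe] at h
  rw [ENNReal.coe_eq_zero]
  by_contra hD0
  have hψD := hψ D (pos_iff_ne_zero.2 hD0)
  have hnear : ∀ᶠ r in 𝓝[>] D, ψ r < D :=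
    (hcont D).mono Ioi_subset_Ici_self (Iio_mem_nhds hψD)
  obtain ⟨r, hψr, hDr⟩ := (hnear.and self_mem_nhdsWithin).exists
  exact (h r hDr).not_gt hψr

theorem stmt16_general {X : Type*} (d : X → X → NNReal) (hd : IsSemiMetric d)
    (hnorm : SMNormal d)
    {q : ℕ} (E : Type*) [Fintype E] (src tgt : E → Fin q)
    (φ : E → NNReal → NNReal) (hφ : ∀ e, SMComparison (φ e) ∧ SMRightCont (φ e))
    (f : E → X → X) (hf : ∀ e x y, d (f e x) (f e y) ≤ φ e (d x y))
    (H₁ H₂ : Fin q → Set X)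
    (h₁ne : ∀ i, (H₁ i).Nonempty) (h₁b : ∀ i, SMBounded d (H₁ i))
    (h₁c : ∀ i, SMClosed d (H₁ i))
    (h₂ne : ∀ i, (H₂ i).Nonempty) (h₂b : ∀ i, SMBounded d (H₂ i))
    (h₂c : ∀ i, SMClosed d (H₂ i))
    (h₁inv : ∀ i, (⋃ (e : E) (_ : src e = i), f e '' H₁ (tgt e)) = H₁ i)
    (h₂inv : ∀ i, (⋃ (e : E) (_ : src e = i), f e '' H₂ (tgt e)) = H₂ i) :
    H₁ = H₂ := by
  set Φ : NNReal → NNReal := fun s ↦ Finset.univ.sup fun e ↦ φ e s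
  have hΦ_mono : Monotone Φ := fun s t hst ↦ Finset.sup_mono_fun fun e _ ↦ (hφ e).1.1 hst
  have hΦ_lt : ∀ t, 0 < t → Φ t < t := fun t ht ↦
    (Finset.sup_lt_iff ht).2 fun e _ ↦ (hφ e).1.lt_self ht
  have hΦ_cont : SMRightCont Φ := fun t ↦
    ContinuousWithinAt.finset_sup_apply fun e _ ↦ (hφ e).2 t
  have hfΦ : ∀ e x y, d (f e x) (f e y) ≤ Φ (d x y) := fun e x y ↦
    (hf e x y).trans (Finset.le_sup (f := fun e ↦ φ e (d x y)) (Finset.mem_univ e))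
  set D : ENNReal := Finset.univ.sup fun i ↦ SMdHP d (H₁ i) (H₂ i)
  have hD_top : D ≠ ⊤ := ((Finset.sup_lt_iff bot_lt_top).2 fun i _ ↦
    SMdHP_lt_top hd.1 hnorm (h₁ne i) (h₁b i) (h₂ne i) (h₂b i)).ne
  have hD_contract : ∀ r : NNReal, D < r → D ≤ Φ r := fun r hr ↦ Finset.sup_le fun i _ ↦ by
    have hT := SMdHP_graphHutchinson_le (src := src) (tgt := tgt) hΦ_mono hfΦ
      (fun j ↦ (Finset.le_sup (Finset.mem_univ j)).trans_lt hr) i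
    rwa [graphHutchinson, graphHutchinson, h₁inv, h₂inv] at hT
  have hD_zero := eq_zero_of_forall_lt_imp_le_apply hΦ_lt hΦ_cont hD_top hD_contract
  funext i
  have hi : SMdHP d (H₁ i) (H₂ i) ≤ D :=
    Finset.le_sup (f := fun i ↦ SMdHP d (H₁ i) (H₂ i)) (Finset.mem_univ i)
  exact eq_of_SMdHP_eq_zero hd.1 (h₁c i) (h₂c i) (le_zero_iff.1 (hD_zero ▸ hi))

theorem stmt16 {X : Type*} (d : X → X → NNReal) (hd : IsSemiMetric d)
    (hnorm : SMNormal d) (hreg : SMRegular d) (hc : SMComplete d)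
    {q : ℕ} (E : Type*) [Fintype E] (src tgt : E → Fin q)
    (hout : ∀ i : Fin q, ∃ e : E, src e = i)
    (φ : E → NNReal → NNReal) (hφ : ∀ e, SMComparison (φ e) ∧ SMRightCont (φ e))
    (f : E → X → X) (hf : ∀ e x y, d (f e x) (f e y) ≤ φ e (d x y))
    (H₁ H₂ : Fin q → Set X)
    (h₁ne : ∀ i, (H₁ i).Nonempty) (h₁b : ∀ i, SMBounded d (H₁ i))
    (h₁c : ∀ i, SMClosed d (H₁ i))
    (h₂ne : ∀ i, (H₂ i).Nonempty) (h₂b : ∀ i, SMBounded d (H₂ i))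
    (h₂c : ∀ i, SMClosed d (H₂ i))
    (h₁inv : ∀ i, (⋃ (e : E) (_ : src e = i), f e '' H₁ (tgt e)) = H₁ i)
    (h₂inv : ∀ i, (⋃ (e : E) (_ : src e = i), f e '' H₂ (tgt e)) = H₂ i) :
    H₁ = H₂ :=
  stmt16_general d hd hnorm E src tgt φ hφ f hf H₁ H₂ h₁ne h₁b h₁c h₂ne h₂b h₂c h₁inv h₂inv
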